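/- arXiv:math-ph/0303063 — 2 statements merged into one kernel-verified Lean document; each statement's English description precedes it below -/
import Mathlib

section
/- (Multiplicative Boole-type formula) Let N ≥ 1, let 0 < γ₁ < ⋯ < γ_N, let ν₁,…,ν_N > 0, set Υ(λ) = Σ_{k=1}^{N} ν_k/(γ_k − λ), and let s₋₁ = Υ(0) = Σ_{k=1}^{N} ν_k/γ_k. Suppose C > s₋₁. Then the N real solutions χ₁ < ⋯ < χ_N of Υ(λ) = C are all positive, satisfy χ_k < γ_k for each k, and ∏_{k=1}^{N} (γ_k/χ_k) = C/(C − s₋₁). -/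
/-!
Write `Υ(x) = ∑ ν_k / (γ_k - x)`. Clearing denominators in `C - Υ(x)` gives
`C · ∏ (x - γ_k) + ∑ ν_k ∏_{m ≠ k} (x - γ_m)`, a polynomial of degree `N` with leading
coefficient `C` that vanishes at the `N` distinct roots `χ_j`; hence it equals `C · ∏ (x - χ_j)`,
and evaluating at `x = 0` gives `C ∏ χ_k = (C - s₋₁) ∏ γ_k`.
Positivity of the roots holds because `Υ(x) ≤ Υ(0) < C` for `x ≤ 0`. Since `Υ` is increasing
between poles, consecutive roots are separated by a pole, and the largest root lies below the
largest pole because `Υ < 0` above all poles; a downward induction then gives `χ_k < γ_k`.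
-/

open Finset

section Polynomial

open Polynomial Lagrange

theorem degree_nodal_sub_nodal_lt {ι R : Type*} [CommRing R] [Nontrivial R] (s : Finset ι)
    (u v : ι → R) : (nodal s u - nodal s v).degree < #s := by
  simpa only [degree_nodal] using degree_sub_lt_left (p := nodal s u) (q := nodal s v)
    (by rw [degree_nodal, degree_nodal]) nodal_monic.ne_zero
    (by rw [nodal_monic.leadingCoeff, nodal_monic.leadingCoeff])

variable {ι K : Type*} [Field K] [DecidableEq ι] {s : Finset ι} {γ χ ν : ι → K}

theorem eval_sum_C_mul_nodal_erase {x : K} (hx : ∀ k ∈ s, x ≠ γ k) :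
    (∑ k ∈ s, C (ν k) * nodal (s.erase k) γ).eval x
      = -(∑ k ∈ s, ν k / (γ k - x)) * (nodal s γ).eval x := by
  simp only [eval_finsetSum, eval_mul, eval_C, eval_nodal, neg_mul, sum_mul, ← sum_neg_distrib]
  refine sum_congr rfl fun k hk => ?_
  have hxk : γ k - x ≠ 0 := sub_ne_zero.2 (hx k hk).symm
  rw [← mul_prod_erase s _ hk]
  field_simp
  ring

theorem C_mul_nodal_eq_of_sum_div_sub_eq {c : K} (hχ : Set.InjOn χ s)
    (hne : ∀ j ∈ s, ∀ k ∈ s, χ j ≠ γ k) (hroot : ∀ j ∈ s, ∑ k ∈ s, ν k / (γ k - χ j) = c) :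
    C c * nodal s χ = C c * nodal s γ + ∑ k ∈ s, C (ν k) * nodal (s.erase k) γ := by
  refine eq_of_degree_sub_lt_of_eval_index_eq s hχ ?_ fun j hj => ?_
  · rw [← mem_degreeLT, ← sub_sub, ← mul_sub, ← smul_eq_C_mul]
    refine Submodule.sub_mem _ (Submodule.smul_mem _ _ ?_) (Submodule.sum_mem _ fun k hk => ?_)
    · exact mem_degreeLT.2 (degree_nodal_sub_nodal_lt s χ γ)
    · rw [mem_degreeLT, ← smul_eq_C_mul]
      refine (degree_smul_le _ _).trans_lt ?_
      rw [degree_nodal, card_erase_of_mem hk, Nat.cast_lt]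
      exact Nat.sub_lt (card_pos.2 ⟨k, hk⟩) one_pos
  · rw [eval_add, eval_sum_C_mul_nodal_erase (hne j hj), hroot j hj, eval_C_mul, eval_C_mul,
      eval_nodal_at_node hj]
    ring

theorem mul_prod_sub_eq_of_sum_div_sub_eq {c x : K} (hχ : Set.InjOn χ s)
    (hne : ∀ j ∈ s, ∀ k ∈ s, χ j ≠ γ k) (hroot : ∀ j ∈ s, ∑ k ∈ s, ν k / (γ k - χ j) = c)
    (hx : ∀ k ∈ s, x ≠ γ k) :
    c * ∏ k ∈ s, (χ k - x) = (c - ∑ k ∈ s, ν k / (γ k - x)) * ∏ k ∈ s, (γ k - x) := by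
  have h := congrArg (eval x) (C_mul_nodal_eq_of_sum_div_sub_eq hχ hne hroot)
  rw [eval_add, eval_sum_C_mul_nodal_erase hx, eval_C_mul, eval_C_mul, eval_nodal,
    eval_nodal] at h
  have hflip : ∀ v : ι → K, ∏ k ∈ s, (v k - x) = (-1) ^ #s * ∏ k ∈ s, (x - v k) := fun v => by
    simp only [← prod_neg, neg_sub]
  rw [hflip, hflip]
  linear_combination (-1) ^ #s * h

end Polynomial

section Real

variable {ι : Type*} {s : Finset ι} {γ ν : ι → ℝ}

theorem div_sub_lt_div_sub {a b c d : ℝ} (ha : 0 < a) (hcd : c < d) (hb : b ∉ Set.Icc c d) :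
    a / (b - c) < a / (b - d) := by
  have hprod : 0 < (b - c) * (b - d) := by
    rcases not_and_or.1 hb with h | h <;> push Not at h <;> nlinarith
  have hc : b - c ≠ 0 := left_ne_zero_of_mul hprod.ne'
  have hd : b - d ≠ 0 := right_ne_zero_of_mul hprod.ne'
  rw [← sub_neg, div_sub_div _ _ hc hd]
  exact div_neg_of_neg_of_pos (by nlinarith) hprod

theorem sum_div_sub_lt_sum_div_sub {x y : ℝ} (hs : s.Nonempty) (hν : ∀ k ∈ s, 0 < ν k)
    (hxy : x < y) (hγ : ∀ k ∈ s, γ k ∉ Set.Icc x y) :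
    ∑ k ∈ s, ν k / (γ k - x) < ∑ k ∈ s, ν k / (γ k - y) :=
  sum_lt_sum_of_nonempty hs fun k hk => div_sub_lt_div_sub (hν k hk) hxy (hγ k hk)

theorem exists_mem_Ioo_of_sum_div_sub_eq {x y : ℝ} (hs : s.Nonempty) (hν : ∀ k ∈ s, 0 < ν k)
    (hxy : x < y) (hx : ∀ k ∈ s, x ≠ γ k) (hy : ∀ k ∈ s, y ≠ γ k)
    (h : ∑ k ∈ s, ν k / (γ k - x) = ∑ k ∈ s, ν k / (γ k - y)) : ∃ k ∈ s, γ k ∈ Set.Ioo x y := by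
  by_contra! hout
  refine (sum_div_sub_lt_sum_div_sub hs hν hxy fun k hk hmem => ?_).ne h
  rcases hmem.1.eq_or_lt with hxk | hxk
  · exact hx k hk hxk
  rcases hmem.2.lt_or_eq with hky | hky
  · exact hout k hk ⟨hxk, hky⟩
  · exact hy k hk hky.symm

theorem sum_div_sub_neg {x : ℝ} (hs : s.Nonempty) (hν : ∀ k ∈ s, 0 < ν k)
    (hx : ∀ k ∈ s, γ k < x) : ∑ k ∈ s, ν k / (γ k - x) < 0 :=
  sum_neg (fun k hk => div_neg_of_pos_of_neg (hν k hk) (sub_neg.2 (hx k hk))) hs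

theorem pos_of_sum_div_lt_sum_div_sub {x : ℝ} (hγ : ∀ k ∈ s, 0 < γ k) (hν : ∀ k ∈ s, 0 ≤ ν k)
    (h : ∑ k ∈ s, ν k / γ k < ∑ k ∈ s, ν k / (γ k - x)) : 0 < x := by
  by_contra! hx
  exact h.not_ge (sum_le_sum fun k hk =>
    div_le_div_of_nonneg_left (hν k hk) (hγ k hk) (by linarith))

theorem root_lt_pole_of_strictMono {N : ℕ} {γ ν χ : Fin N → ℝ} {c : ℝ} (hγ : Monotone γ)
    (hν : ∀ k, 0 < ν k) (hc : 0 ≤ c) (hχ : StrictMono χ) (hne : ∀ j k, χ j ≠ γ k)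
    (hroot : ∀ j, ∑ k, ν k / (γ k - χ j) = c) (k : Fin N) : χ k < γ k := by
  obtain ⟨n, rfl⟩ := Nat.exists_eq_succ_of_ne_zero k.pos.ne'
  induction k using Fin.reverseInduction with
  | last =>
    by_contra! h
    have hlt : ∀ i ∈ univ, γ i < χ (Fin.last n) := fun i _ =>
      (hγ (Fin.le_last i)).trans_lt (h.lt_of_ne (hne _ _).symm)
    linarith [sum_div_sub_neg univ_nonempty (fun i _ => hν i) hlt, hroot (Fin.last n)]
  | cast i ih =>
    obtain ⟨t, -, hit, hti⟩ := exists_mem_Ioo_of_sum_div_sub_eq univ_nonempty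
      (fun k _ => hν k) (hχ i.castSucc_lt_succ) (fun k _ => hne _ k) (fun k _ => hne _ k)
      ((hroot _).trans (hroot _).symm)
    have hti' : t ≤ i.castSucc := by
      by_contra! h
      exact (hγ (Fin.castSucc_lt_iff_succ_le.1 h)).not_gt (hti.trans ih)
    exact hit.trans_le (hγ hti')

end Real

theorem stmt_4_general (N : ℕ) (γ ν : Fin N → ℝ)
    (hγ : StrictMono γ) (hγpos : ∀ k, 0 < γ k) (hν : ∀ k, 0 < ν k)
    (C : ℝ) (hC : (∑ k, ν k / γ k) < C)
    (χ : Fin N → ℝ) (hχ : StrictMono χ) (hne : ∀ j k, χ j ≠ γ k)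
    (hroot : ∀ j, ∑ k, ν k / (γ k - χ j) = C) :
    (∀ k, 0 < χ k) ∧ (∀ k, χ k < γ k) ∧
    (∏ k, γ k / χ k) = C / (C - ∑ k, ν k / γ k) := by
  have hs : 0 ≤ ∑ k, ν k / γ k := sum_nonneg fun k _ => (div_pos (hν k) (hγpos k)).le
  have hχpos : ∀ k, 0 < χ k := fun k => pos_of_sum_div_lt_sum_div_sub (fun k _ => hγpos k)
    (fun k _ => (hν k).le) (hC.trans_eq (hroot k).symm)
  refine ⟨hχpos, root_lt_pole_of_strictMono hγ.monotone hν (hs.trans hC.le) hχ hne hroot, ?_⟩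
  have hboole := mul_prod_sub_eq_of_sum_div_sub_eq (s := univ) (x := 0) hχ.injective.injOn
    (fun j _ k _ => hne j k) (fun j _ => hroot j) (fun k _ => (hγpos k).ne)
  simp only [sub_zero] at hboole
  rw [prod_div_distrib, div_eq_div_iff (prod_pos fun k _ => hχpos k).ne' (sub_pos.2 hC).ne']
  linarith

/-- Multiplicative Boole-type formula: for positive poles `γ` and `C > s₋₁ = ∑ ν_k/γ_k`,
the `N` real solutions `χ₁ < ⋯ < χ_N` of `∑ ν_k/(γ_k - λ) = C` are positive,
satisfy `χ_k < γ_k`, and `∏ (γ_k/χ_k) = C/(C - s₋₁)`. -/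
theorem stmt_4 (N : ℕ) (hN : 1 ≤ N) (γ ν : Fin N → ℝ)
    (hγ : StrictMono γ) (hγpos : ∀ k, 0 < γ k) (hν : ∀ k, 0 < ν k)
    (C : ℝ) (hC : (∑ k, ν k / γ k) < C)
    (χ : Fin N → ℝ) (hχ : StrictMono χ) (hne : ∀ j k, χ j ≠ γ k)
    (hroot : ∀ j, ∑ k, ν k / (γ k - χ j) = C) :
    (∀ k, 0 < χ k) ∧ (∀ k, χ k < γ k) ∧
    (∏ k, γ k / χ k) = C / (C - ∑ k, ν k / γ k) :=
  stmt_4_general N γ ν hγ hγpos hν C hC χ hχ hne hroot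
end

section
/- (First trace coefficient I₁(0,1)) Let m : ℝ → ℝ be continuous with compact support. Define ψ₀(x) = 2 e^{x/2}, θ₀(x) = 2 e^{−x/2}, ψ₁(x) = −4 ∫_{−∞}^{x} sinh((x−ξ)/2) e^{ξ/2} m(ξ) dξ, and θ₁(x) = 4 ∫_{x}^{+∞} sinh((x−ξ)/2) e^{−ξ/2} m(ξ) dξ. Then for every x ∈ ℝ: θ₀(x) ψ₁'(x) + θ₁(x) ψ₀'(x) − θ₀'(x) ψ₁(x) − θ₁'(x) ψ₀(x) = −4 ∫_ℝ m(ξ) dξ. -/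
open MeasureTheory Set Real

/-!
Split `sinh ((x - ξ) / 2)` into exponentials: then `ψ₁ = 2 (e^{-x/2} B - e^{x/2} A)` and
`θ₁ = 2 (e^{x/2} C - e^{-x/2} D)`, where `A, B` are integrals of `m, e^ξ m` over `(-∞, x]` and
`C, D` integrals of `e^{-ξ} m, m` over `[x, ∞)`. In `ψ₁'` and `θ₁'` the terms coming from
differentiating the integrals cancel (the kernel vanishes on the diagonal), and the `B`, `C`
terms cancel in the Wronskian combination, leaving `-4 (A + D) = -4 ∫ m`.
-/

section IntegralsOverHalfLines

variable {f : ℝ → ℝ}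

theorem hasDerivAt_integral_Iic (hf : Continuous f) (hi : Integrable f) (x : ℝ) :
    HasDerivAt (fun y => ∫ ξ in Iic y, f ξ) (f x) x := by
  have hsplit : ∀ y, ∫ ξ in Iic y, f ξ = (∫ ξ in Iic 0, f ξ) + ∫ ξ in (0 : ℝ)..y, f ξ := fun y => by
    rw [← intervalIntegral.integral_Iic_sub_Iic hi.integrableOn hi.integrableOn]; ring
  rw [funext hsplit]
  exact (intervalIntegral.integral_hasDerivAt_right hi.intervalIntegrable
    (hf.stronglyMeasurableAtFilter _ _) hf.continuousAt).const_add _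

theorem hasDerivAt_integral_Ici (hf : Continuous f) (hi : Integrable f) (x : ℝ) :
    HasDerivAt (fun y => ∫ ξ in Ici y, f ξ) (-f x) x := by
  have hsplit : ∀ y, ∫ ξ in Ici y, f ξ = (∫ ξ in Ici 0, f ξ) - ∫ ξ in (0 : ℝ)..y, f ξ := fun y => by
    rw [← intervalIntegral.integral_Ici_sub_Ici' hi.integrableOn hi.integrableOn]; ring
  rw [funext hsplit]
  exact (intervalIntegral.integral_hasDerivAt_right hi.intervalIntegrable
    (hf.stronglyMeasurableAtFilter _ _) hf.continuousAt).const_sub _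

theorem integral_Iic_add_integral_Ici (hi : Integrable f) (x : ℝ) :
    (∫ ξ in Iic x, f ξ) + ∫ ξ in Ici x, f ξ = ∫ ξ, f ξ := by
  rw [integral_Iic_eq_integral_Iio]
  exact intervalIntegral.integral_Iio_add_Ici hi.integrableOn hi.integrableOn

end IntegralsOverHalfLines

theorem sinh_half_sub_mul_exp_half (x ξ : ℝ) :
    sinh ((x - ξ) / 2) * exp (ξ / 2) = (exp (x / 2) - exp (-x / 2) * exp ξ) / 2 := by
  rw [sinh_eq, div_mul_eq_mul_div, sub_mul, ← exp_add, ← exp_add, ← exp_add]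
  ring_nf

theorem sinh_half_sub_mul_exp_neg_half (x ξ : ℝ) :
    sinh ((x - ξ) / 2) * exp (-ξ / 2) = (exp (x / 2) * exp (-ξ) - exp (-x / 2)) / 2 := by
  rw [sinh_eq, div_mul_eq_mul_div, sub_mul, ← exp_add, ← exp_add, ← exp_add]
  ring_nf

theorem hasDerivAt_exp_half (x : ℝ) : HasDerivAt (fun y => exp (y / 2)) (exp (x / 2) / 2) x :=
  ((hasDerivAt_id' x).div_const 2).exp.congr_deriv (by ring)

theorem hasDerivAt_exp_neg_half (x : ℝ) :
    HasDerivAt (fun y => exp (-y / 2)) (-exp (-x / 2) / 2) x :=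
  ((hasDerivAt_neg' x).div_const 2).exp.congr_deriv (by ring)

section FirstOrderCoefficients

variable {m : ℝ → ℝ} (hm : Continuous m) (hsupp : HasCompactSupport m)
include hm hsupp

theorem integrable_mul_of_hasCompactSupport {g : ℝ → ℝ} (hg : Continuous g) :
    Integrable (fun ξ => g ξ * m ξ) :=
  (hg.mul hm).integrable_of_hasCompactSupport hsupp.mul_left

theorem neg_four_mul_integral_Iic_sinh (x : ℝ) :
    -4 * ∫ ξ in Iic x, sinh ((x - ξ) / 2) * exp (ξ / 2) * m ξ
      = 2 * (exp (-x / 2) * (∫ ξ in Iic x, exp ξ * m ξ) - exp (x / 2) * ∫ ξ in Iic x, m ξ) := by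
  have hB := (integrable_mul_of_hasCompactSupport hm hsupp continuous_exp).integrableOn (s := Iic x)
  have hA := (hm.integrable_of_hasCompactSupport (μ := volume) hsupp).integrableOn (s := Iic x)
  simp_rw [sinh_half_sub_mul_exp_half, div_mul_eq_mul_div, sub_mul, mul_assoc, sub_div]
  rw [integral_sub ((hA.const_mul _).div_const _) ((hB.const_mul _).div_const _),
    integral_div, integral_div, integral_const_mul, integral_const_mul]
  ring

theorem four_mul_integral_Ici_sinh (x : ℝ) :
    4 * ∫ ξ in Ici x, sinh ((x - ξ) / 2) * exp (-ξ / 2) * m ξ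
      = 2 * (exp (x / 2) * (∫ ξ in Ici x, exp (-ξ) * m ξ) - exp (-x / 2) * ∫ ξ in Ici x, m ξ) := by
  have hC := (integrable_mul_of_hasCompactSupport hm hsupp
    (g := fun ξ => exp (-ξ)) (by fun_prop)).integrableOn (s := Ici x)
  have hD := (hm.integrable_of_hasCompactSupport (μ := volume) hsupp).integrableOn (s := Ici x)
  simp_rw [sinh_half_sub_mul_exp_neg_half, div_mul_eq_mul_div, sub_mul, mul_assoc, sub_div]
  rw [integral_sub ((hC.const_mul _).div_const _) ((hD.const_mul _).div_const _),
    integral_div, integral_div, integral_const_mul, integral_const_mul]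
  ring

theorem hasDerivAt_neg_four_mul_integral_Iic_sinh (x : ℝ) :
    HasDerivAt (fun y => -4 * ∫ ξ in Iic y, sinh ((y - ξ) / 2) * exp (ξ / 2) * m ξ)
      (-(exp (x / 2) * (∫ ξ in Iic x, m ξ) + exp (-x / 2) * ∫ ξ in Iic x, exp ξ * m ξ)) x := by
  rw [funext (neg_four_mul_integral_Iic_sinh hm hsupp)]
  have hA := hasDerivAt_integral_Iic hm (hm.integrable_of_hasCompactSupport hsupp) x
  have hB := hasDerivAt_integral_Iic (f := fun ξ => exp ξ * m ξ) (by fun_prop)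
    (integrable_mul_of_hasCompactSupport hm hsupp continuous_exp) x
  have hexp : exp (-x / 2) * exp x = exp (x / 2) := by rw [← exp_add]; ring_nf
  exact ((((hasDerivAt_exp_neg_half x).fun_mul hB).fun_sub
    ((hasDerivAt_exp_half x).fun_mul hA)).const_mul 2).congr_deriv
    (by linear_combination 2 * m x * hexp)

theorem hasDerivAt_four_mul_integral_Ici_sinh (x : ℝ) :
    HasDerivAt (fun y => 4 * ∫ ξ in Ici y, sinh ((y - ξ) / 2) * exp (-ξ / 2) * m ξ)
      (exp (x / 2) * (∫ ξ in Ici x, exp (-ξ) * m ξ) + exp (-x / 2) * ∫ ξ in Ici x, m ξ) x := by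
  rw [funext (four_mul_integral_Ici_sinh hm hsupp)]
  have hC := hasDerivAt_integral_Ici (f := fun ξ => exp (-ξ) * m ξ) (by fun_prop)
    (integrable_mul_of_hasCompactSupport hm hsupp (by fun_prop)) x
  have hD := hasDerivAt_integral_Ici hm (hm.integrable_of_hasCompactSupport hsupp) x
  have hexp : exp (x / 2) * exp (-x) = exp (-x / 2) := by rw [← exp_add]; ring_nf
  exact ((((hasDerivAt_exp_half x).fun_mul hC).fun_sub
    ((hasDerivAt_exp_neg_half x).fun_mul hD)).const_mul 2).congr_deriv
    (by linear_combination -2 * m x * hexp)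

end FirstOrderCoefficients

/-- First trace coefficient `I₁(0,1)`: for `m` continuous with compact support,
`θ₀ ψ₁' + θ₁ ψ₀' - θ₀' ψ₁ - θ₁' ψ₀ = -4 ∫ m(ξ) dξ` for every `x`. -/
theorem stmt_18 (m : ℝ → ℝ) (hm : Continuous m) (hsupp : HasCompactSupport m)
    (ψ₀ θ₀ ψ₁ θ₁ : ℝ → ℝ)
    (hψ₀ : ∀ x, ψ₀ x = 2 * Real.exp (x / 2))
    (hθ₀ : ∀ x, θ₀ x = 2 * Real.exp (-x / 2))
    (hψ₁ : ∀ x, ψ₁ x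
      = -4 * ∫ ξ in Set.Iic x, Real.sinh ((x - ξ) / 2) * Real.exp (ξ / 2) * m ξ)
    (hθ₁ : ∀ x, θ₁ x
      = 4 * ∫ ξ in Set.Ici x, Real.sinh ((x - ξ) / 2) * Real.exp (-ξ / 2) * m ξ) :
    ∀ x : ℝ,
      θ₀ x * deriv ψ₁ x + θ₁ x * deriv ψ₀ x - deriv θ₀ x * ψ₁ x - deriv θ₁ x * ψ₀ x
        = -4 * ∫ ξ : ℝ, m ξ := by
  intro x
  obtain rfl := funext hψ₀
  obtain rfl := funext hθ₀
  obtain rfl := funext hψ₁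
  obtain rfl := funext hθ₁
  beta_reduce
  rw [((hasDerivAt_exp_half x).const_mul 2).deriv, ((hasDerivAt_exp_neg_half x).const_mul 2).deriv,
    (hasDerivAt_neg_four_mul_integral_Iic_sinh hm hsupp x).deriv,
    (hasDerivAt_four_mul_integral_Ici_sinh hm hsupp x).deriv,
    neg_four_mul_integral_Iic_sinh hm hsupp, four_mul_integral_Ici_sinh hm hsupp,
    ← integral_Iic_add_integral_Ici (hm.integrable_of_hasCompactSupport hsupp) x]
  have hexp : exp (-x / 2) * exp (x / 2) = 1 := by rw [← exp_add]; ring_nf; exact exp_zero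
  linear_combination -4 * ((∫ ξ in Iic x, m ξ) + ∫ ξ in Ici x, m ξ) * hexp
end
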